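/- arXiv:1507.03554 — 3 statements merged into one kernel-verified Lean document; each statement's English description precedes it below -/
import Mathlib

section
/- Let K be a field of characteristic p with 3 ≤ p < k-1 ≤ 2p-2 and let f = x^2 y + a y^p + y^{k-1} in K[[x,y]] for any a ∈ K. Then μ(f) = k. -/
/-!
The Jacobian ideal of `f` is `(2 x y, x ^ 2 + (k - 1) y ^ (k - 2))`: the derivative of `a y ^ p`
carries the factor `p`, and `k - 1` is a unit because `p < k - 1 < 2 p`.

For `c ≠ 0` and `n ≥ 1` the quotient `K[[x, y]] ⧸ (x y, x ^ 2 + c y ^ n)` has basis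
`x, 1, y, …, y ^ n`. Indeed a series lies in the ideal iff its coefficients at
`x, 1, y, …, y ^ (n - 1)` vanish and its `y ^ n`-coefficient is `c` times its `x ^ 2`-coefficient:
off the axes everything is divisible by `x y`, and on the axes `x ^ 2 P(x) + y ^ n Q(y)` is
reduced by `x ^ 2 ≡ -c y ^ n`.
Hence `μ(f) = (k - 2) + 2 = k`.
-/

open MvPowerSeries

noncomputable def pd {n : ℕ} {K : Type} [Field K] (i : Fin n)
    (f : MvPowerSeries (Fin n) K) : MvPowerSeries (Fin n) K :=
  fun m => ((m i + 1 : ℕ) : K) * MvPowerSeries.coeff (R := K) (m + Finsupp.single i 1) f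

/-- The Milnor number: dimension of the quotient by the Jacobian ideal. -/
noncomputable def milnor {n : ℕ} (K : Type) [Field K] (f : MvPowerSeries (Fin n) K) : ℕ :=
  Module.finrank K (MvPowerSeries (Fin n) K ⧸ Ideal.span (Set.range fun i => pd i f))

open Finsupp

theorem pd_eq_pderiv {n : ℕ} {K : Type} [Field K] (i : Fin n) (f : MvPowerSeries (Fin n) K) :
    pd i f = pderiv K i f := by
  ext m
  rw [coeff_pderiv, mul_comm, ← Nat.cast_succ]
  exact rfl

theorem MvPowerSeries.X_mul_X_dvd_iff {σ R : Type*} [CommSemiring R] {s t : σ} (hst : s ≠ t)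
    {φ : MvPowerSeries σ R} :
    X s * X t ∣ φ ↔ ∀ m : σ →₀ ℕ, (m s = 0 ∨ m t = 0) → coeff m φ = 0 := by
  constructor
  · rintro hdvd m (hm | hm)
    · exact X_dvd_iff.mp (dvd_trans (dvd_mul_right _ _) hdvd) m hm
    · exact X_dvd_iff.mp (dvd_trans (dvd_mul_left _ _) hdvd) m hm
  · intro h
    obtain ⟨ψ, rfl⟩ := X_dvd_iff.mpr fun m hm => h m (Or.inl hm)
    refine mul_dvd_mul_left _ (X_dvd_iff.mpr fun m hm => ?_)
    have hψ := h (m + single s 1) (Or.inr (by simp [hm, hst]))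
    rwa [X_def, coeff_monomial_mul, if_pos le_add_self, add_tsub_cancel_right, one_mul] at hψ

noncomputable def bideg (i j : ℕ) : Fin 2 →₀ ℕ := single 0 i + single 1 j

@[simp] lemma bideg_apply_zero (i j : ℕ) : bideg i j 0 = i := by simp [bideg]
@[simp] lemma bideg_apply_one (i j : ℕ) : bideg i j 1 = j := by simp [bideg]

lemma bideg_apply_self (m : Fin 2 →₀ ℕ) : bideg (m 0) (m 1) = m := by
  ext x; fin_cases x <;> simp

@[simp] lemma bideg_inj {i j i' j' : ℕ} : bideg i j = bideg i' j' ↔ i = i' ∧ j = j' := by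
  refine ⟨fun h => ⟨by simpa using congr($h 0), by simpa using congr($h 1)⟩, ?_⟩
  rintro ⟨rfl, rfl⟩; rfl

@[simp] lemma bideg_le_bideg {i j i' j' : ℕ} : bideg i j ≤ bideg i' j' ↔ i ≤ i' ∧ j ≤ j' := by
  rw [Finsupp.le_def, Fin.forall_fin_two]; simp

@[simp] lemma bideg_sub_bideg (i j i' j' : ℕ) :
    bideg i j - bideg i' j' = bideg (i - i') (j - j') := by
  ext x; fin_cases x <;> simp

lemma single_zero_eq_bideg (i : ℕ) : single (0 : Fin 2) i = bideg i 0 := by simp [bideg]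
lemma single_one_eq_bideg (j : ℕ) : single (1 : Fin 2) j = bideg 0 j := by simp [bideg]

section DNormalForm

variable {K : Type} [Field K] (n : ℕ) (c : K)

lemma coeff_bideg_mul_X_sq_add (B : MvPowerSeries (Fin 2) K) (i j : ℕ) :
    coeff (bideg i j) (B * (X 0 ^ 2 + C c * X 1 ^ n)) =
      (if 2 ≤ i then coeff (bideg (i - 2) j) B else 0) +
        if n ≤ j then c * coeff (bideg i (j - n)) B else 0 := by
  rw [X_pow_eq, X_pow_eq, ← monomial_zero_eq_C_apply, monomial_mul_monomial, zero_add, mul_one,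
    single_zero_eq_bideg, single_one_eq_bideg, mul_add, map_add, coeff_mul_monomial,
    coeff_mul_monomial]
  simp only [bideg_le_bideg, bideg_sub_bideg, zero_le, and_true, true_and, Nat.sub_zero, mul_one,
    mul_comm c]

noncomputable def dCoords : MvPowerSeries (Fin 2) K →ₗ[K] K × (Fin (n + 1) → K) :=
  (coeff (bideg 1 0)).prod <| LinearMap.pi fun j =>
    coeff (bideg 0 j) - if j = Fin.last n then c • coeff (bideg 2 0) else 0

lemma dCoords_apply (g : MvPowerSeries (Fin 2) K) :
    dCoords n c g = (coeff (bideg 1 0) g, fun j : Fin (n + 1) =>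
      coeff (bideg 0 j) g - if j = Fin.last n then c * coeff (bideg 2 0) g else 0) := by
  ext j <;> simp [dCoords, apply_ite (fun L : MvPowerSeries (Fin 2) K →ₗ[K] K => L g)]

lemma dCoords_eq_zero_iff (g : MvPowerSeries (Fin 2) K) :
    dCoords n c g = 0 ↔ coeff (bideg 1 0) g = 0 ∧ (∀ j < n, coeff (bideg 0 j) g = 0) ∧
      coeff (bideg 0 n) g = c * coeff (bideg 2 0) g := by
  simp [dCoords_apply, funext_iff, Fin.forall_fin_succ', Fin.forall_iff, sub_eq_zero]

lemma dCoords_surjective : Function.Surjective (dCoords n c) := by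
  rintro ⟨s, w⟩
  refine ⟨s • X 0 + ∑ j, w j • X 1 ^ (j : ℕ), ?_⟩
  rw [dCoords_apply]
  ext j <;> simp [coeff_X, coeff_X_pow, single_zero_eq_bideg, single_one_eq_bideg, Fin.val_inj]

lemma dCoords_mul_X_mul_X (A : MvPowerSeries (Fin 2) K) : dCoords n c (A * (X 0 * X 1)) = 0 := by
  have h := (X_mul_X_dvd_iff (by decide : (0 : Fin 2) ≠ 1)).mp (dvd_mul_left _ A)
  rw [dCoords_eq_zero_iff]
  exact ⟨h _ (by simp), fun j _ => h _ (by simp), by rw [h _ (by simp), h _ (by simp), mul_zero]⟩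

lemma dCoords_mul_X_sq_add (hn : 1 ≤ n) (B : MvPowerSeries (Fin 2) K) :
    dCoords n c (B * (X 0 ^ 2 + C c * X 1 ^ n)) = 0 := by
  rw [dCoords_eq_zero_iff]
  simp only [coeff_bideg_mul_X_sq_add]
  refine ⟨?_, fun j hj => ?_, ?_⟩ <;> simp <;> omega

lemma exists_mul_add_mul_of_dCoords_eq_zero (hn : 1 ≤ n) (hc : c ≠ 0)
    {g : MvPowerSeries (Fin 2) K} (hg : dCoords n c g = 0) :
    ∃ A B, A * (X 0 * X 1) + B * (X 0 ^ 2 + C c * X 1 ^ n) = g := by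
  obtain ⟨hx, hy, hyn⟩ := (dCoords_eq_zero_iff n c g).mp hg
  have hn0 : n ≠ 0 := by omega
  -- modulo `x y`, `g ≡ x ^ 2 P(x) + y ^ n Q(y)` with `Q(0) = c P(0)`; take `B = P + c⁻¹ (Q - Q(0))`
  let B : MvPowerSeries (Fin 2) K := fun m =>
    if m 1 = 0 then coeff (bideg (m 0 + 2) 0) g
    else if m 0 = 0 then c⁻¹ * coeff (bideg 0 (m 1 + n)) g else 0
  have hB (i j : ℕ) : coeff (bideg i j) B = if j = 0 then coeff (bideg (i + 2) 0) g
      else if i = 0 then c⁻¹ * coeff (bideg 0 (j + n)) g else 0 := by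
    rw [coeff_apply]
    simp [B]
  obtain ⟨A, hA⟩ : X 0 * X 1 ∣ g - B * (X 0 ^ 2 + C c * X 1 ^ n) := by
    refine (X_mul_X_dvd_iff (by decide)).mpr fun m hm => ?_
    obtain ⟨i, j, rfl⟩ : ∃ i j, m = bideg i j := ⟨m 0, m 1, (bideg_apply_self m).symm⟩
    rw [map_sub, coeff_bideg_mul_X_sq_add, sub_eq_zero, hB, hB]
    simp only [bideg_apply_zero, bideg_apply_one] at hm
    rcases hm with rfl | rfl
    · rcases lt_trichotomy j n with hj | rfl | hj
      · simp [hy j hj, hj.not_ge]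
      · simp [hyn]
      · simp [hj.le, hc, (Nat.sub_pos_of_lt hj).ne', Nat.sub_add_cancel hj.le]
    · rcases i with _ | _ | i
      · simp [hy 0 hn, hn0]
      · simp [hx, hn0]
      · simp [hn0]
  exact ⟨A, B, by rw [mul_comm, ← hA]; ring⟩

lemma ker_dCoords (hn : 1 ≤ n) (hc : c ≠ 0) : LinearMap.ker (dCoords n c) =
    (Ideal.span {X 0 * X 1, X 0 ^ 2 + C c * X 1 ^ n}).restrictScalars K := by
  ext g
  rw [LinearMap.mem_ker, Submodule.restrictScalars_mem, Ideal.mem_span_pair]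
  refine ⟨exists_mul_add_mul_of_dCoords_eq_zero n c hn hc, ?_⟩
  rintro ⟨A, B, rfl⟩
  rw [map_add, dCoords_mul_X_mul_X, dCoords_mul_X_sq_add n c hn, add_zero]

theorem finrank_quotient_span_X_mul_X_X_sq_add (hn : 1 ≤ n) (hc : c ≠ 0) :
    Module.finrank K (MvPowerSeries (Fin 2) K ⧸
      Ideal.span {X 0 * X 1, X 0 ^ 2 + C c * X 1 ^ n}) = n + 2 := by
  rw [← (Submodule.Quotient.restrictScalarsEquiv K _).finrank_eq, ← ker_dCoords n c hn hc,
    ((dCoords n c).quotKerEquivOfSurjective (dCoords_surjective n c)).finrank_eq,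
    Module.finrank_prod, Module.finrank_self, Module.finrank_fin_fun]
  ring

end DNormalForm

theorem stmt2 (K : Type) [Field K] (p k : ℕ) [CharP K p] (hp : 3 ≤ p)
    (hk1 : p < k - 1) (hk2 : k - 1 ≤ 2 * p - 2) (a : K) :
    milnor K (X (0 : Fin 2) ^ 2 * X 1 + C (σ := Fin 2) (R := K) a * X 1 ^ p + X 1 ^ (k - 1)) = k := by
  set f : MvPowerSeries (Fin 2) K := X 0 ^ 2 * X 1 + C a * X 1 ^ p + X 1 ^ (k - 1)
  have h2 : IsUnit (C (2 : K) : MvPowerSeries (Fin 2) K) := by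
    refine (Ne.isUnit ?_).map C
    exact_mod_cast (CharP.cast_eq_zero_iff K p 2).not.mpr
      (Nat.not_dvd_of_pos_of_lt two_pos (by omega))
  have hc : ((k - 1 : ℕ) : K) ≠ 0 := (CharP.cast_eq_zero_iff K p _).not.mpr fun hdvd =>
    Nat.not_dvd_of_pos_of_lt (by omega) (by omega) (Nat.dvd_sub hdvd dvd_rfl)
  have hfx : pderiv K 0 f = C 2 * (X 0 * X 1) := by
    simp [f, map_ofNat]
    ring
  have hp0 : (p : MvPowerSeries (Fin 2) K) = 0 := by
    rw [← map_natCast C, CharP.cast_eq_zero, map_zero]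
  have hfy : pderiv K 1 f = X 0 ^ 2 + C ((k - 1 : ℕ) : K) * X 1 ^ (k - 2) := by
    simp [f, hp0, Nat.sub_sub]
  have hrange : Set.range (fun i => pd i f) = {pd 0 f, pd 1 f} := by
    ext; simp [Fin.exists_fin_two, eq_comm]
  rw [milnor, hrange, pd_eq_pderiv, pd_eq_pderiv, hfx, hfy, Ideal.span_insert,
    Ideal.span_singleton_mul_left_unit h2, ← Ideal.span_insert,
    finrank_quotient_span_X_mul_X_X_sq_add _ _ (by omega) hc]
  omega
end

section
/- Let K be an algebraically closed field and f ∈ K[x,y,z] a nonzero reducible homogeneous cubic. Then f is equivalent under invertible linear change of coordinates to one of: x^3, x^2 y, x^2 z + y z^2, x^3 + x y z, x^3 + x z^2, x y z. -/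
/-!
A change of coordinates sends the linear factor to `x = X 0`, so that `f = x · q(x, y, z)`.
Changing `y, z` among themselves brings the binary form `q(0, y, z)` to `0`, `y²` or `y z`
(square roots, and `2 ≠ 0` to complete the square). Shears `y ↦ y + λ x`, `z ↦ z + μ x` then
clear the mixed terms `x y`, `x z` as far as possible, and a cube root rescales the surviving
`x³` coefficient to `1`.
-/

open MvPolynomial

namespace MvPolynomial

variable {σ R : Type*} [Fintype σ] [CommRing R]

noncomputable def linSubst (A : Matrix σ σ R) : MvPolynomial σ R →ₐ[R] MvPolynomial σ R :=
  aeval fun i => ∑ j, C (A i j) * X j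

@[simp]
theorem linSubst_X (A : Matrix σ σ R) (i : σ) : linSubst A (X i) = ∑ j, C (A i j) * X j :=
  aeval_X _ _

@[simp]
theorem linSubst_C (A : Matrix σ σ R) (r : R) : linSubst A (C r) = C r :=
  aeval_C _ _

theorem linSubst_comp_linSubst (A B : Matrix σ σ R) :
    (linSubst A).comp (linSubst B) = linSubst (B * A) := by
  refine algHom_ext fun i => ?_
  simp only [AlgHom.comp_apply, linSubst_X, map_sum, map_mul, linSubst_C, Finset.mul_sum,
    Matrix.mul_apply, Finset.sum_mul, mul_assoc]
  exact Finset.sum_comm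

theorem linSubst_linSubst (A B : Matrix σ σ R) (p : MvPolynomial σ R) :
    linSubst A (linSubst B p) = linSubst (B * A) p :=
  AlgHom.congr_fun (linSubst_comp_linSubst A B) p

theorem IsHomogeneous.linSubst {p : MvPolynomial σ R} {n : ℕ} (hp : p.IsHomogeneous n)
    (A : Matrix σ σ R) : (linSubst A p).IsHomogeneous n := by
  have hlin (i : σ) : (∑ j, C (A i j) * X j : MvPolynomial σ R).IsHomogeneous 1 :=
    IsHomogeneous.sum _ _ 1 fun j _ => isHomogeneous_C_mul_X (A i j) j
  have h := hp.aeval _ hlin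
  rw [one_mul] at h
  exact h

theorem IsHomogeneous.exists_eq_sum_C_mul_X {p : MvPolynomial σ R} (hp : p.IsHomogeneous 1) :
    ∃ c : σ → R, p = ∑ i, C (c i) * X i := by
  have hp' : p ∈ Submodule.span R (Set.range X) := by
    rwa [← homogeneousSubmodule_one_eq_span_X]
  obtain ⟨c, hc⟩ := (Submodule.mem_span_range_iff_exists_fun R).mp hp'
  exact ⟨c, by simp [← hc, smul_eq_C_mul]⟩

theorem IsHomogeneous.exists_eq_sum_C_mul_X_mul_X {p : MvPolynomial σ R}
    (hp : p.IsHomogeneous 2) :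
    ∃ c : σ → σ → R, p = ∑ i, ∑ j, C (c i j) * (X i * X j) := by
  have hp' : p ∈ Submodule.span R
      (Set.range fun ij : σ × σ => (X ij.1 * X ij.2 : MvPolynomial σ R)) := by
    rwa [← Set.image2_range, Set.image2_mul, ← Submodule.span_mul_span, ← pow_two,
      ← homogeneousSubmodule_one_eq_span_X, homogeneousSubmodule_one_pow]
  obtain ⟨c, hc⟩ := (Submodule.mem_span_range_iff_exists_fun R).mp hp'
  exact ⟨fun i j => c (i, j), by simp [← hc, smul_eq_C_mul, Fintype.sum_prod_type]⟩

variable [DecidableEq σ]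

theorem linSubst_one : linSubst (1 : Matrix σ σ R) = AlgHom.id R _ := by
  ext i
  simp [Matrix.one_apply]

theorem linSubst_inv_linSubst {A : Matrix σ σ R} (hA : IsUnit A.det)
    (p : MvPolynomial σ R) : linSubst A⁻¹ (linSubst A p) = p := by
  rw [linSubst_linSubst, Matrix.mul_nonsing_inv A hA, linSubst_one, AlgHom.id_apply]

theorem linSubst_linSubst_inv {A : Matrix σ σ R} (hA : IsUnit A.det)
    (p : MvPolynomial σ R) : linSubst A (linSubst A⁻¹ p) = p := by
  rw [linSubst_linSubst, Matrix.nonsing_inv_mul A hA, linSubst_one, AlgHom.id_apply]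

def LinearlyEquivalent (p q : MvPolynomial σ R) : Prop :=
  ∃ A : Matrix σ σ R, IsUnit A.det ∧ linSubst A p = q

namespace LinearlyEquivalent

variable {p q r : MvPolynomial σ R}

theorem refl (p : MvPolynomial σ R) : LinearlyEquivalent p p :=
  ⟨1, by simp, by simp [linSubst_one]⟩

theorem symm (h : LinearlyEquivalent p q) : LinearlyEquivalent q p := by
  obtain ⟨A, hA, rfl⟩ := h
  exact ⟨A⁻¹, A.isUnit_nonsing_inv_det hA, linSubst_inv_linSubst hA p⟩

theorem trans (hpq : LinearlyEquivalent p q) (hqr : LinearlyEquivalent q r) :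
    LinearlyEquivalent p r := by
  obtain ⟨A, hA, rfl⟩ := hpq
  obtain ⟨B, hB, rfl⟩ := hqr
  refine ⟨A * B, ?_, (linSubst_linSubst B A p).symm⟩
  rw [Matrix.det_mul]
  exact hA.mul hB

theorem ne_zero (h : LinearlyEquivalent p q) (hq : q ≠ 0) : p ≠ 0 := by
  rintro rfl
  obtain ⟨A, -, rfl⟩ := h
  exact hq (map_zero _)

theorem of_det_ne_zero {K : Type*} [Field K] {p q : MvPolynomial σ K} (A : Matrix σ σ K)
    (hA : A.det ≠ 0) (h : linSubst A p = q) : LinearlyEquivalent p q :=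
  ⟨A, isUnit_iff_ne_zero.mpr hA, h⟩

end LinearlyEquivalent

end MvPolynomial

namespace ReducibleCubic

variable {K : Type*} [Field K]

variable (K) in
def normalForms : Set (MvPolynomial (Fin 3) K) :=
  {X 0 ^ 3, X 0 ^ 2 * X 1, X 0 ^ 2 * X 2 + X 1 * X 2 ^ 2,
    X 0 ^ 3 + X 0 * X 1 * X 2, X 0 ^ 3 + X 0 * X 2 ^ 2, X 0 * X 1 * X 2}

def HasNormalForm (f : MvPolynomial (Fin 3) K) : Prop :=
  ∃ n ∈ normalForms K, LinearlyEquivalent f n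

theorem HasNormalForm.of_linearlyEquivalent {f g : MvPolynomial (Fin 3) K}
    (h : LinearlyEquivalent f g) (hg : HasNormalForm g) : HasNormalForm f := by
  obtain ⟨n, hn, hgn⟩ := hg
  exact ⟨n, hn, h.trans hgn⟩

noncomputable def xMulQuadric (a b c d e g : K) : MvPolynomial (Fin 3) K :=
  X 0 * (C a * X 0 ^ 2 + C b * X 0 * X 1 + C c * X 0 * X 2
    + C d * X 1 ^ 2 + C e * X 1 * X 2 + C g * X 2 ^ 2)

/-- The coordinate change `x ↦ l x, y ↦ p x + q y + r z, z ↦ s x + t y + u z`. -/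
theorem xMulQuadric_linearlyEquivalent {a b c d e g a' b' c' d' e' g' : K} (l p q r s t u : K)
    (hdet : l * (q * u - r * t) ≠ 0)
    (ha : a' = l * (a * l ^ 2 + b * l * p + c * l * s + d * p ^ 2 + e * p * s + g * s ^ 2))
    (hb : b' = l * (b * l * q + c * l * t + 2 * d * p * q + e * (p * t + q * s) + 2 * g * s * t))
    (hc : c' = l * (b * l * r + c * l * u + 2 * d * p * r + e * (p * u + r * s) + 2 * g * s * u))
    (hd : d' = l * (d * q ^ 2 + e * q * t + g * t ^ 2))
    (he : e' = l * (2 * d * q * r + e * (q * u + r * t) + 2 * g * t * u))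
    (hg : g' = l * (d * r ^ 2 + e * r * u + g * u ^ 2)) :
    LinearlyEquivalent (xMulQuadric a b c d e g) (xMulQuadric a' b' c' d' e' g') := by
  refine .of_det_ne_zero !![l, 0, 0; p, q, r; s, t, u]
    (by convert hdet using 1; simp [Matrix.det_fin_three]; ring) ?_
  subst ha hb hc hd he hg
  simp [xMulQuadric, Fin.sum_univ_three, map_ofNat]
  ring

theorem hasNormalForm_of_eq {f : MvPolynomial (Fin 3) K} (n : MvPolynomial (Fin 3) K)
    (hn : n ∈ normalForms K) (h : f = n) : HasNormalForm f :=
  h ▸ ⟨n, hn, .refl n⟩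

theorem hasNormalForm_xMulQuadric_y_sq : HasNormalForm (xMulQuadric (0 : K) 0 0 1 0 0) :=
  .of_linearlyEquivalent
    (.of_det_ne_zero !![0, 1, 0; 1, 0, 0; 0, 0, 1] (by simp [Matrix.det_fin_three])
      (by simp [xMulQuadric, Fin.sum_univ_three]; ring))
    (hasNormalForm_of_eq (X 0 ^ 2 * X 1) (by simp [normalForms]) rfl)

theorem hasNormalForm_xMulQuadric_xz_add_y_sq : HasNormalForm (xMulQuadric (0 : K) 0 1 1 0 0) :=
  .of_linearlyEquivalent
    (.of_det_ne_zero !![0, 0, 1; 1, 0, 0; 0, 1, 0] (by simp [Matrix.det_fin_three])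
      (by simp [xMulQuadric, Fin.sum_univ_three]; ring))
    (hasNormalForm_of_eq (X 0 ^ 2 * X 2 + X 1 * X 2 ^ 2) (by simp [normalForms]) rfl)

theorem exists_det_ne_zero_and_row_zero_eq {c : Fin 3 → K} (hc : c ≠ 0) :
    ∃ A : Matrix (Fin 3) (Fin 3) K, A.det ≠ 0 ∧ A 0 = c := by
  obtain ⟨i, hi⟩ := Function.ne_iff.mp hc
  fin_cases i
  · exact ⟨!![c 0, c 1, c 2; 0, 1, 0; 0, 0, 1], by simpa [Matrix.det_fin_three] using hi,
      by ext j; fin_cases j <;> rfl⟩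
  · exact ⟨!![c 0, c 1, c 2; 1, 0, 0; 0, 0, 1], by simpa [Matrix.det_fin_three] using hi,
      by ext j; fin_cases j <;> rfl⟩
  · exact ⟨!![c 0, c 1, c 2; 1, 0, 0; 0, 1, 0], by simpa [Matrix.det_fin_three] using hi,
      by ext j; fin_cases j <;> rfl⟩

theorem linearlyEquivalent_X_zero {ℓ : MvPolynomial (Fin 3) K} (hℓ : ℓ.IsHomogeneous 1)
    (hℓ0 : ℓ ≠ 0) : LinearlyEquivalent (X 0) ℓ := by
  obtain ⟨c, rfl⟩ := hℓ.exists_eq_sum_C_mul_X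
  have hc : c ≠ 0 := by rintro rfl; simp at hℓ0
  obtain ⟨A, hA, hAc⟩ := exists_det_ne_zero_and_row_zero_eq hc
  exact .of_det_ne_zero A hA (by simp [← hAc])

variable [IsAlgClosed K]

theorem exists_pow_three_mul_eq_one {a : K} (ha : a ≠ 0) :
    ∃ l : K, l ≠ 0 ∧ l ^ 3 * a = 1 := by
  obtain ⟨l, hl⟩ := IsAlgClosed.exists_pow_nat_eq a⁻¹ three_pos
  refine ⟨l, ?_, by rw [hl, inv_mul_cancel₀ ha]⟩
  rintro rfl
  simp [eq_comm, ha] at hl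

theorem hasNormalForm_xMulQuadric_binary_zero {a b c : K} (hne : xMulQuadric a b c 0 0 0 ≠ 0) :
    HasNormalForm (xMulQuadric a b c 0 0 0) := by
  have hx2y : HasNormalForm (xMulQuadric (0 : K) 1 0 0 0 0) :=
    hasNormalForm_of_eq (X 0 ^ 2 * X 1) (by simp [normalForms]) (by simp [xMulQuadric]; ring)
  rcases ne_or_eq b 0 with hb | rfl
  · have step : LinearlyEquivalent (xMulQuadric a b c 0 0 0) (xMulQuadric 0 1 0 0 0 0) :=
      xMulQuadric_linearlyEquivalent 1 (-a / b) (1 / b) (-c / b) 0 0 1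
        (by simp [hb]) (by field_simp; ring) (by field_simp; ring) (by field_simp; ring) (by ring)
        (by ring) (by ring)
    exact .of_linearlyEquivalent step hx2y
  rcases ne_or_eq c 0 with hc | rfl
  · have step : LinearlyEquivalent (xMulQuadric a 0 c 0 0 0) (xMulQuadric 0 1 0 0 0 0) :=
      xMulQuadric_linearlyEquivalent 1 0 0 1 (-a / c) (1 / c) 0
        (by simp [hc]) (by field_simp; ring) (by field_simp; ring) (by ring) (by ring) (by ring)
        (by ring)
    exact .of_linearlyEquivalent step hx2y
  have ha : a ≠ 0 := by rintro rfl; simp [xMulQuadric] at hne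
  obtain ⟨l, hl0, hl⟩ := exists_pow_three_mul_eq_one ha
  have step : LinearlyEquivalent (xMulQuadric a 0 0 0 0 0) (xMulQuadric 1 0 0 0 0 0) :=
    xMulQuadric_linearlyEquivalent l 0 1 0 0 0 1
      (by simpa using hl0) (by linear_combination -hl) (by ring) (by ring) (by ring) (by ring)
      (by ring)
  exact .of_linearlyEquivalent step
    (hasNormalForm_of_eq (X 0 ^ 3) (by simp [normalForms]) (by simp [xMulQuadric]; ring))

theorem hasNormalForm_xMulQuadric_binary_yz (a b c : K) :
    HasNormalForm (xMulQuadric a b c 0 1 0) := by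
  have shear : LinearlyEquivalent (xMulQuadric a b c 0 1 0) (xMulQuadric (a - b * c) 0 0 0 1 0) :=
    xMulQuadric_linearlyEquivalent 1 (-c) 1 0 (-b) 0 1
      (by norm_num) (by ring) (by ring) (by ring) (by ring) (by ring) (by ring)
  refine .of_linearlyEquivalent shear ?_
  rcases eq_or_ne (a - b * c) 0 with ha | ha
  · rw [ha]
    exact hasNormalForm_of_eq (X 0 * X 1 * X 2) (by simp [normalForms])
      (by simp [xMulQuadric]; ring)
  obtain ⟨l, hl0, hl⟩ := exists_pow_three_mul_eq_one ha
  have scale : LinearlyEquivalent (xMulQuadric (a - b * c) 0 0 0 1 0) (xMulQuadric 1 0 0 0 1 0) :=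
    xMulQuadric_linearlyEquivalent l 0 (l ^ 2 * (a - b * c)) 0 0 0 1
      (by simp [hl0, ha]) (by linear_combination -hl) (by ring) (by ring) (by ring)
      (by linear_combination -hl) (by ring)
  exact .of_linearlyEquivalent scale
    (hasNormalForm_of_eq (X 0 ^ 3 + X 0 * X 1 * X 2) (by simp [normalForms])
      (by simp [xMulQuadric]; ring))

theorem hasNormalForm_xMulQuadric_binary_y_sq (hchar : (2 : K) ≠ 0) (a b c : K) :
    HasNormalForm (xMulQuadric a b c 1 0 0) := by
  have shear : LinearlyEquivalent (xMulQuadric a b c 1 0 0)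
      (xMulQuadric (a - (b / 2) ^ 2) 0 c 1 0 0) :=
    xMulQuadric_linearlyEquivalent 1 (-b / 2) 1 0 0 0 1
      (by norm_num) (by field_simp; ring) (by field_simp; ring) (by ring) (by ring) (by ring)
      (by ring)
  refine .of_linearlyEquivalent shear ?_
  generalize a - (b / 2) ^ 2 = a'
  rcases ne_or_eq c 0 with hc | rfl
  · have step : LinearlyEquivalent (xMulQuadric a' 0 c 1 0 0) (xMulQuadric 0 0 1 1 0 0) :=
      xMulQuadric_linearlyEquivalent 1 0 1 0 (-a' / c) 0 (1 / c)
        (by simp [hc]) (by field_simp; ring) (by ring) (by field_simp; ring) (by ring) (by ring)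
        (by ring)
    exact .of_linearlyEquivalent step hasNormalForm_xMulQuadric_xz_add_y_sq
  rcases eq_or_ne a' 0 with ha | ha
  · rw [ha]
    exact hasNormalForm_xMulQuadric_y_sq
  obtain ⟨l, hl0, hl⟩ := exists_pow_three_mul_eq_one ha
  obtain ⟨m, hm⟩ := IsAlgClosed.exists_pow_nat_eq l⁻¹ two_pos
  have hm0 : m ≠ 0 := by rintro rfl; simp [eq_comm, hl0] at hm
  have scale : LinearlyEquivalent (xMulQuadric a' 0 0 1 0 0) (xMulQuadric 1 0 0 0 0 1) :=
    xMulQuadric_linearlyEquivalent l 0 0 m 0 1 0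
      (by simp [hl0, hm0]) (by linear_combination -hl) (by ring) (by ring) (by ring)
      (by ring) (by simp [hm, hl0])
  exact .of_linearlyEquivalent scale
    (hasNormalForm_of_eq (X 0 ^ 3 + X 0 * X 2 ^ 2) (by simp [normalForms])
      (by simp [xMulQuadric]; ring))

theorem hasNormalForm_xMulQuadric_of_d_ne_zero (hchar : (2 : K) ≠ 0) (a b c e g : K) {d : K}
    (hd : d ≠ 0) : HasNormalForm (xMulQuadric a b c d e g) := by
  obtain ⟨s, rfl⟩ := IsAlgClosed.exists_pow_nat_eq d two_pos
  have hs : s ≠ 0 := by rintro rfl; simp at hd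
  have complete : LinearlyEquivalent (xMulQuadric a b c (s ^ 2) e g)
      (xMulQuadric a (b / s) (c - b * e / (2 * s ^ 2)) 1 0 (g - (e / (2 * s)) ^ 2)) :=
    xMulQuadric_linearlyEquivalent 1 0 (1 / s) (-e / (2 * s ^ 2)) 0 0 1
      (by simp [hs]) (by ring) (by field_simp; ring) (by field_simp; ring) (by field_simp; ring)
      (by field_simp; ring) (by field_simp; ring)
  refine .of_linearlyEquivalent complete ?_
  generalize b / s = b', c - b * e / (2 * s ^ 2) = c', g - (e / (2 * s)) ^ 2 = g'
  rcases eq_or_ne g' 0 with hg | hg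
  · rw [hg]
    exact hasNormalForm_xMulQuadric_binary_y_sq hchar a b' c'
  obtain ⟨t, ht⟩ := IsAlgClosed.exists_pow_nat_eq (-g') two_pos
  have ht0 : t ≠ 0 := by rintro rfl; simp [eq_comm, hg] at ht
  have split : LinearlyEquivalent (xMulQuadric a b' c' 1 0 g')
      (xMulQuadric a (b' / 2 + c' / (2 * t)) (b' / 2 - c' / (2 * t)) 0 1 0) :=
    xMulQuadric_linearlyEquivalent 1 0 (1 / 2) (1 / 2) 0 (1 / (2 * t)) (-1 / (2 * t))
      (by ring_nf; simp [hchar, ht0]) (by ring) (by ring) (by ring)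
      (by field_simp; linear_combination -ht) (by field_simp; linear_combination 2 * ht)
      (by field_simp; linear_combination -ht)
  exact .of_linearlyEquivalent split (hasNormalForm_xMulQuadric_binary_yz _ _ _)

theorem hasNormalForm_xMulQuadric (hchar : (2 : K) ≠ 0) {a b c d e g : K}
    (hne : xMulQuadric a b c d e g ≠ 0) : HasNormalForm (xMulQuadric a b c d e g) := by
  rcases ne_or_eq d 0 with hd | rfl
  · exact hasNormalForm_xMulQuadric_of_d_ne_zero hchar a b c e g hd
  rcases ne_or_eq g 0 with hg | rfl
  · have swap : LinearlyEquivalent (xMulQuadric a b c 0 e g) (xMulQuadric a c b g e 0) :=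
      xMulQuadric_linearlyEquivalent 1 0 0 1 0 1 0
        (by norm_num) (by ring) (by ring) (by ring) (by ring) (by ring) (by ring)
    exact .of_linearlyEquivalent swap (hasNormalForm_xMulQuadric_of_d_ne_zero hchar a c b e 0 hg)
  rcases ne_or_eq e 0 with he | rfl
  · have scale : LinearlyEquivalent (xMulQuadric a b c 0 e 0) (xMulQuadric a (b / e) c 0 1 0) :=
      xMulQuadric_linearlyEquivalent 1 0 (1 / e) 0 0 0 1
        (by simp [he]) (by ring) (by ring) (by ring) (by ring) (by field_simp; ring) (by ring)
    exact .of_linearlyEquivalent scale (hasNormalForm_xMulQuadric_binary_yz a (b / e) c)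
  exact hasNormalForm_xMulQuadric_binary_zero hne

theorem hasNormalForm_mul_of_isHomogeneous (hchar : (2 : K) ≠ 0) {ℓ q : MvPolynomial (Fin 3) K}
    (hℓ : ℓ.IsHomogeneous 1) (hq : q.IsHomogeneous 2) (hne : ℓ * q ≠ 0) :
    HasNormalForm (ℓ * q) := by
  obtain ⟨A, hA, hAℓ⟩ := linearlyEquivalent_X_zero hℓ (left_ne_zero_of_mul hne)
  have hx : LinearlyEquivalent (X 0 * linSubst A⁻¹ q) (ℓ * q) :=
    ⟨A, hA, by rw [map_mul, hAℓ, linSubst_linSubst_inv hA]⟩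
  obtain ⟨k, hk⟩ := (hq.linSubst A⁻¹).exists_eq_sum_C_mul_X_mul_X
  have hF : X 0 * linSubst A⁻¹ q = xMulQuadric (k 0 0) (k 0 1 + k 1 0) (k 0 2 + k 2 0)
      (k 1 1) (k 1 2 + k 2 1) (k 2 2) := by
    rw [hk]
    simp [xMulQuadric, Fin.sum_univ_three]
    ring
  rw [hF] at hx
  exact .of_linearlyEquivalent hx.symm (hasNormalForm_xMulQuadric hchar (hx.ne_zero hne))

end ReducibleCubic

theorem stmt9 (K : Type) [Field K] [IsAlgClosed K] (hchar : (2 : K) ≠ 0)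
    (f : MvPolynomial (Fin 3) K) (hf0 : f ≠ 0)
    (hred : ∃ g₁ g₂ : MvPolynomial (Fin 3) K,
      f = g₁ * g₂ ∧ g₁.IsHomogeneous 1 ∧ g₂.IsHomogeneous 2) :
    ∃ A : Matrix (Fin 3) (Fin 3) K, IsUnit A.det ∧
      aeval (fun i => ∑ j, MvPolynomial.C (A i j) * X j) f ∈
        ({X 0 ^ 3, X 0 ^ 2 * X 1, X 0 ^ 2 * X 2 + X 1 * X 2 ^ 2,
          X 0 ^ 3 + X 0 * X 1 * X 2, X 0 ^ 3 + X 0 * X 2 ^ 2, X 0 * X 1 * X 2} :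
          Set (MvPolynomial (Fin 3) K)) := by
  obtain ⟨ℓ, q, rfl, hℓ, hq⟩ := hred
  obtain ⟨n, hn, A, hA, rfl⟩ :=
    ReducibleCubic.hasNormalForm_mul_of_isHomogeneous hchar hℓ hq hf0
  exact ⟨A, hA, hn⟩
end

section
/- Let K be a field of characteristic 2 and f = a_1 x^2 + a_2 x^4 + x^5 + x_2 x_3 ∈ K[[x, x_2, x_3]] for any a_1, a_2 ∈ K. Then μ(f) = 4. -/
open MvPowerSeries

/-!
In characteristic 2 the derivatives of `a₁ x²` and `a₂ x⁴` vanish and `5 x⁴ = x⁴`, so the Jacobian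
ideal of `f` is the monomial ideal `(x⁴, x₃, x₂)`. For any exponents `e`, a power series lies in
`(X j ^ e j)_j` iff its coefficients vanish on the box `{m | ∀ j, m j < e j}`: a series with this
property is divided by the generators by charging each monomial outside the box to one coordinate
it overflows. Hence the quotient is free on the box, of dimension `∏ j, e j`, here `4 · 1 · 1`.
-/

open Finsupp

namespace MvPowerSeries

lemma C_mul_X_pow_eq_monomial {σ R : Type*} [CommSemiring R] (a : R) (i : σ) (k : ℕ) :
    C a * X i ^ k = monomial (single i k) a := by
  rw [X_pow_eq, ← monomial_zero_eq_C_apply, monomial_mul_monomial, zero_add, mul_one]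

lemma X_mul_X_eq_monomial {σ R : Type*} [CommSemiring R] (i j : σ) :
    (X i * X j : MvPowerSeries σ R) = monomial (single i 1 + single j 1) 1 := by
  rw [X_def, X_def, monomial_mul_monomial, mul_one]

variable {σ R : Type*} [CommRing R] (e : σ → ℕ)

lemma coeff_mul_X_pow_eq_zero_of_lt {j : σ} {m : σ →₀ ℕ} (hm : m j < e j)
    (q : MvPowerSeries σ R) : coeff m (q * X j ^ e j) = 0 := by
  rw [X_pow_eq, coeff_mul_monomial, if_neg (by simpa [single_le_iff] using hm)]

/-- Some `j` with `e j ≤ m j`, if there is one: the generator `X j ^ e j` that the monomial `m`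
is charged to when dividing by the family `X j ^ e j`. -/
noncomputable def overflowIndex (m : σ →₀ ℕ) : Option σ :=
  open Classical in if h : ∃ j, e j ≤ m j then some h.choose else none

lemma le_of_overflowIndex_eq_some {m : σ →₀ ℕ} {j : σ} (h : overflowIndex e m = some j) :
    e j ≤ m j := by
  unfold overflowIndex at h
  split_ifs at h with hex
  exact Option.some_inj.mp h ▸ hex.choose_spec

lemma lt_of_overflowIndex_eq_none {m : σ →₀ ℕ} (h : overflowIndex e m = none) (j : σ) :
    m j < e j := by
  unfold overflowIndex at h
  split_ifs at h with hex
  push Not at hex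
  exact hex j

section Division

variable [DecidableEq σ]

noncomputable def divXPow (g : MvPowerSeries σ R) (j : σ) : MvPowerSeries σ R :=
  fun m => if overflowIndex e (m + single j (e j)) = some j then coeff (m + single j (e j)) g
    else 0

lemma coeff_divXPow_mul_X_pow (g : MvPowerSeries σ R) (j : σ) (m : σ →₀ ℕ) :
    coeff m (divXPow e g j * X j ^ e j) =
      if overflowIndex e m = some j then coeff m g else 0 := by
  rw [X_pow_eq, coeff_mul_monomial, mul_one]
  by_cases hle : single j (e j) ≤ m
  · rw [if_pos hle]
    exact congrArg (fun n => if overflowIndex e n = some j then coeff n g else 0)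
      (tsub_add_cancel_of_le hle)
  · rw [if_neg hle, if_neg]
    exact fun h => hle (single_le_iff.mpr (le_of_overflowIndex_eq_some e h))

end Division

variable [Fintype σ]

theorem mem_span_range_X_pow_iff (g : MvPowerSeries σ R) :
    g ∈ Ideal.span (Set.range fun j => X j ^ e j) ↔
      ∀ m : σ →₀ ℕ, (∀ j, m j < e j) → coeff m g = 0 := by
  classical
  rw [Ideal.mem_span_range_iff_exists_fun]
  constructor
  · rintro ⟨c, rfl⟩ m hm
    simp [map_sum, coeff_mul_X_pow_eq_zero_of_lt e (hm _)]
  · refine fun hg => ⟨divXPow e g, ext fun m => ?_⟩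
    simp only [map_sum, coeff_divXPow_mul_X_pow]
    cases h : overflowIndex e m with
    | none => simp [hg m (lt_of_overflowIndex_eq_none e h)]
    | some j => simp

noncomputable def boxCoeffs : MvPowerSeries σ R →ₗ[R] ((Π j, Fin (e j)) → R) :=
  LinearMap.pi fun t => coeff (equivFunOnFinite.symm fun j => (t j : ℕ))

lemma boxCoeffs_surjective : Function.Surjective (boxCoeffs (R := R) e) := by
  intro c
  refine ⟨fun m => if h : ∀ j, m j < e j then c fun j => ⟨m j, h j⟩ else 0,
    funext fun t => ?_⟩
  change dite _ _ _ = c t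
  rw [dif_pos (fun j => by simp)]
  congr 1

lemma ker_boxCoeffs : LinearMap.ker (boxCoeffs (R := R) e) =
    (Ideal.span (Set.range fun j => (X j : MvPowerSeries σ R) ^ e j)).restrictScalars R := by
  ext g
  simp only [LinearMap.mem_ker, Submodule.restrictScalars_mem, mem_span_range_X_pow_iff]
  refine ⟨fun h m hm => ?_, fun h => funext fun t => h _ fun j => by simp⟩
  have hm' : (equivFunOnFinite.symm fun j => m j) = m := by ext; simp
  simpa [boxCoeffs, hm'] using congrFun h fun j => ⟨m j, hm j⟩

theorem finrank_quotient_span_range_X_pow [Nontrivial R] :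
    Module.finrank R
      (MvPowerSeries σ R ⧸ Ideal.span (Set.range fun j => (X j : MvPowerSeries σ R) ^ e j)) =
      ∏ j, e j := by
  classical
  have E := ((Submodule.Quotient.restrictScalarsEquiv R _).symm.trans
    (Submodule.quotEquivOfEq _ _ (ker_boxCoeffs e).symm)).trans
    ((boxCoeffs (R := R) e).quotKerEquivOfSurjective (boxCoeffs_surjective e))
  rw [E.finrank_eq, Module.finrank_pi, Fintype.card_pi]
  simp

end MvPowerSeries

section Jacobian

variable {n : ℕ} {K : Type} [Field K]

lemma pd_add (i : Fin n) (f g : MvPowerSeries (Fin n) K) : pd i (f + g) = pd i f + pd i g :=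
  funext fun _ => mul_add _ (coeff _ f) (coeff _ g)

lemma pd_monomial (i : Fin n) (s : Fin n →₀ ℕ) (a : K) :
    pd i (monomial s a) = monomial (s - single i 1) ((s i : K) * a) := by
  funext m
  change ((m i + 1 : ℕ) : K) * coeff (m + single i 1) (monomial s a) = coeff m (monomial _ _)
  rw [coeff_monomial, coeff_monomial]
  rcases Nat.eq_zero_or_pos (s i) with hs | hs
  · have : m + single i 1 ≠ s := fun h => by simpa [hs] using congrArg (· i) h
    simp [this, hs]
  · have hle : single i 1 ≤ s := single_le_iff.mpr hs
    by_cases hm : m = s - single i 1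
    · subst hm
      simp [tsub_add_cancel_of_le hle, Nat.sub_add_cancel hs]
    · rw [if_neg hm, if_neg fun h => hm (eq_tsub_of_add_eq h), mul_zero]

lemma pd_eq_of_charP_two [CharP K 2] (a₁ a₂ : K) :
    (fun i => pd i (C (σ := Fin 3) a₁ * X 0 ^ 2 + C a₂ * X 0 ^ 4 + X 0 ^ 5 + X 1 * X 2)) =
      ![X 0 ^ 4, X 2, X 1] := by
  have h2 : (2 : K) = 0 := CharTwo.two_eq_zero
  have h4 : (4 : K) = 0 := by linear_combination (2 : K) * h2
  have h5 : (5 : K) = 1 := by linear_combination (2 : K) * h2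
  rw [C_mul_X_pow_eq_monomial, C_mul_X_pow_eq_monomial, X_pow_eq, X_mul_X_eq_monomial, X_pow_eq,
    X_def 1, X_def 2]
  simp only [pd_add, pd_monomial]
  funext i
  fin_cases i <;> simp [h2, h4, h5, ← single_tsub]

end Jacobian

theorem stmt15 (K : Type) [Field K] [CharP K 2] (a₁ a₂ : K) :
    milnor K (C (σ := Fin 3) (R := K) a₁ * X 0 ^ 2 + C (σ := Fin 3) (R := K) a₂ * X 0 ^ 4 + X 0 ^ 5
      + X 1 * X 2) = 4 := by
  have hJ : Set.range (fun i => pd i (C (σ := Fin 3) (R := K) a₁ * X 0 ^ 2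
      + C (σ := Fin 3) (R := K) a₂ * X 0 ^ 4 + X 0 ^ 5 + X 1 * X 2))
      = Set.range fun j => (X j : MvPowerSeries (Fin 3) K) ^ ![4, 1, 1] j := by
    rw [pd_eq_of_charP_two, ← EquivLike.range_comp _ (Equiv.swap (1 : Fin 3) 2)]
    congr 1
    funext j
    fin_cases j <;> simp [Equiv.swap_apply_of_ne_of_ne]
  rw [milnor, hJ, finrank_quotient_span_range_X_pow]
  rfl
end
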